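/- arXiv:2104.04407 — 2 statements merged into one kernel-verified Lean document; each statement's English description precedes it below -/
import Mathlib

section
/- Let (x_n)_{n≥0} be a sequence of positive reals, p > 0, c ≥ 0, C' ≥ 0 constants, and set b := 1 + p - c(1 + C'p). Assume b > 1, assume x_m ≥ (1+p)·x_{m-1} - c · max_{2 ≤ k ≤ 4} x_{m-k} for all m ≥ 7, and assume (1+C'p)·x_6 ≥ max_{3 ≤ k ≤ 5} x_k and x_7 ≥ b·x_6. Then for all n ≥ 7, x_n ≥ b·x_{n-1} and (1+C'p)·x_n ≥ max_{1 ≤ k ≤ 3} x_{n-k}. Consequently x_n ≥ b^{n-6}·x_6 for all n ≥ 6, so x_n → ∞. -/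
open Finset Filter

/-- Growth of a positive sequence satisfying the survival-phase recursion: with
`b = 1 + p - c(1 + C'p) > 1`, the recursion and initial conditions imply
`x_n ≥ b x_{n-1}` and `(1+C'p) x_n ≥ max_{1≤k≤3} x_{n-k}` for `n ≥ 7`, hence
`x_n ≥ b^{n-6} x_6` for `n ≥ 6` and `x_n → ∞`. -/
theorem stmt12 (x : ℕ → ℝ) (hx : ∀ n, 0 < x n) (p c C' : ℝ)
    (hp : 0 < p) (hc : 0 ≤ c) (hC' : 0 ≤ C')
    (hb : 1 < 1 + p - c * (1 + C' * p))
    (hrec : ∀ m ≥ 7, x m ≥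
      (1 + p) * x (m - 1) - c * (Finset.Icc 2 4).sup' ⟨2, by decide⟩ (fun k => x (m - k)))
    (hinit1 : (1 + C' * p) * x 6 ≥ (Finset.Icc 3 5).sup' ⟨3, by decide⟩ (fun k => x k))
    (hinit2 : x 7 ≥ (1 + p - c * (1 + C' * p)) * x 6) :
    (∀ n ≥ 7, x n ≥ (1 + p - c * (1 + C' * p)) * x (n - 1) ∧
      (1 + C' * p) * x n ≥ (Finset.Icc 1 3).sup' ⟨1, by decide⟩ (fun k => x (n - k))) ∧
    (∀ n ≥ 6, x n ≥ (1 + p - c * (1 + C' * p)) ^ (n - 6) * x 6) ∧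
    Tendsto x atTop atTop := by
  set b := 1 + p - c * (1 + C' * p) with hbdef
  have hCp : (1:ℝ) ≤ 1 + C' * p := by nlinarith
  have hx4 : x 4 ≤ (1 + C' * p) * x 6 :=
    le_trans (Finset.le_sup' (f := fun k => x k) (by decide : 4 ∈ Finset.Icc 3 5)) hinit1
  have hx5 : x 5 ≤ (1 + C' * p) * x 6 :=
    le_trans (Finset.le_sup' (f := fun k => x k) (by decide : 5 ∈ Finset.Icc 3 5)) hinit1
  have key : ∀ n, n ≥ 7 → x n ≥ b * x (n - 1) ∧
      (1 + C' * p) * x n ≥ (Finset.Icc 1 3).sup' ⟨1, by decide⟩ (fun k => x (n - k)) := by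
    intro n
    induction n with
    | zero => omega
    | succ m ih =>
      intro hn
      rcases eq_or_lt_of_le hn with h7 | h8
      · -- m + 1 = 7
        have hm : m = 6 := by omega
        subst hm
        have hx67 : x 6 ≤ x 7 := le_trans (by nlinarith [hx 6]) hinit2
        refine ⟨hinit2, Finset.sup'_le _ _ ?_⟩
        intro k hk
        simp only [Finset.mem_Icc] at hk; obtain ⟨hk1, hk2⟩ := hk
        interval_cases k
        · show x 6 ≤ (1 + C' * p) * x 7
          nlinarith [hx 7]
        · show x 5 ≤ (1 + C' * p) * x 7
          nlinarith [hx 7, hx 6]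
        · show x 4 ≤ (1 + C' * p) * x 7
          nlinarith [hx 7, hx 6]
      · -- m ≥ 7
        obtain ⟨ih1, ih2⟩ := ih (by omega)
        have hrm := hrec (m + 1) (by omega)
        have hS : (Finset.Icc 2 4).sup' ⟨2, by decide⟩ (fun k => x (m + 1 - k)) ≤
            (1 + C' * p) * x m := by
          apply Finset.sup'_le
          intro k hk
          simp only [Finset.mem_Icc] at hk; obtain ⟨hk1, hk2⟩ := hk
          refine le_trans ?_ ih2
          interval_cases k
          · exact Finset.le_sup' (f := fun k => x (m - k)) (by decide : 1 ∈ Finset.Icc 1 3)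
          · have : m + 1 - 3 = m - 2 := by omega
            rw [this]
            exact Finset.le_sup' (f := fun k => x (m - k)) (by decide : 2 ∈ Finset.Icc 1 3)
          · have : m + 1 - 4 = m - 3 := by omega
            rw [this]
            exact Finset.le_sup' (f := fun k => x (m - k)) (by decide : 3 ∈ Finset.Icc 1 3)
        have hstep : x (m + 1) ≥ b * x m := by
          have : (m + 1 : ℕ) - 1 = m := by omega
          rw [this] at hrm
          rw [hbdef]
          nlinarith [mul_le_mul_of_nonneg_left hS hc]
        have hmono : x m ≤ x (m + 1) := le_trans (by nlinarith [hx m]) hstep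
        refine ⟨by simpa using hstep, Finset.sup'_le _ _ ?_⟩
        intro k hk
        simp only [Finset.mem_Icc] at hk; obtain ⟨hk1, hk2⟩ := hk
        interval_cases k
        · show x m ≤ (1 + C' * p) * x (m + 1)
          nlinarith [hx (m+1)]
        · have : m + 1 - 2 = m - 1 := by omega
          rw [this]
          calc x (m - 1) ≤ (1 + C' * p) * x m :=
                le_trans (Finset.le_sup' (f := fun k => x (m - k))
                  (by decide : 1 ∈ Finset.Icc 1 3)) ih2
            _ ≤ (1 + C' * p) * x (m + 1) := by nlinarith
        · have : m + 1 - 3 = m - 2 := by omega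
          rw [this]
          calc x (m - 2) ≤ (1 + C' * p) * x m :=
                le_trans (Finset.le_sup' (f := fun k => x (m - k))
                  (by decide : 2 ∈ Finset.Icc 1 3)) ih2
            _ ≤ (1 + C' * p) * x (m + 1) := by nlinarith
  have key2 : ∀ n ≥ 6, x n ≥ b ^ (n - 6) * x 6 := by
    intro n
    induction n with
    | zero => omega
    | succ m ih =>
      intro hn
      rcases eq_or_lt_of_le hn with h6 | h7
      · have hm : m = 5 := by omega
        subst hm
        simp
      · have hb0 : (0:ℝ) < b := by linarith
        have h1 := (key (m + 1) (by omega)).1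
        have h2 := ih (by omega)
        have : (m + 1 : ℕ) - 1 = m := by omega
        rw [this] at h1
        have hpow : m + 1 - 6 = (m - 6) + 1 := by omega
        rw [hpow, pow_succ]
        calc b ^ (m - 6) * b * x 6 = b * (b ^ (m - 6) * x 6) := by ring
          _ ≤ b * x m := by nlinarith [pow_pos hb0 (m - 6)]
          _ ≤ x (m + 1) := h1
  refine ⟨key, key2, ?_⟩
  have h1 : Tendsto (fun n : ℕ => b ^ (n - 6) * x 6) atTop atTop := by
    apply Tendsto.atTop_mul_const (hx 6)
    exact (tendsto_pow_atTop_atTop_of_one_lt hb).comp (tendsto_sub_atTop_nat 6)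
  apply tendsto_atTop_mono' _ _ h1
  filter_upwards [eventually_ge_atTop 6] with n hn
  exact key2 n hn
end

section
/- For every constant C₂ > 0 there exists C > C₂ and p₃ > 0 such that for all real p, q with 0 < p < p₃ and 0 ≤ q < (2/5)·p·(1 - C·p), one has 1 + p - ((5/2)·q·(1+p)⁴ + C₂·q²)·(1 + C₂·p) > 1. -/
/-- For every `C₂ > 0` there exist `C > C₂` and `p₃ > 0` such that whenever
`0 < p < p₃` and `0 ≤ q < (2/5) p (1 - C p)`, the effective growth rate
`b = 1 + p - ((5/2) q (1+p)⁴ + C₂ q²)(1 + C₂ p)` exceeds `1`. -/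
theorem stmt13 (C₂ : ℝ) (hC₂ : 0 < C₂) :
    ∃ C > C₂, ∃ p₃ > 0, ∀ p q : ℝ, 0 < p → p < p₃ → 0 ≤ q →
      q < (2 / 5) * p * (1 - C * p) →
      1 < 1 + p - ((5 / 2) * q * (1 + p) ^ 4 + C₂ * q ^ 2) * (1 + C₂ * p) := by
  refine ⟨5 + 3 * C₂, by linarith, 1 / (100 * (1 + C₂) ^ 3), by positivity, ?_⟩
  intro p q hp hpp hq hqQ
  have hC2 : (1:ℝ) ≤ 1 + C₂ := by linarith
  have hp1 : p ≤ 1 / 100 := by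
    have h1 : (100:ℝ) ≤ 100 * (1 + C₂) ^ 3 := by nlinarith [pow_pos hC₂ 3, sq_nonneg C₂, hC₂.le]
    have : 1 / (100 * (1 + C₂) ^ 3) ≤ 1 / 100 := by
      apply one_div_le_one_div_of_le <;> linarith
    linarith
  have hpc : p * (1 + C₂) ^ 3 < 1 / 100 := by
    have h3 : (0:ℝ) < (1 + C₂) ^ 3 := by positivity
    have heq : 1 / (100 * (1 + C₂) ^ 3) * (1 + C₂) ^ 3 = 1 / 100 := by
      field_simp
    linarith [mul_lt_mul_of_pos_right hpp h3]
  have hQpos : 0 < (2 / 5) * p * (1 - (5 + 3 * C₂) * p) := lt_of_le_of_lt hq hqQ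
  have h1Cp : 0 < 1 - (5 + 3 * C₂) * p := by nlinarith
  have hqle : q ≤ (2/5) * p := by nlinarith [mul_nonneg hp.le (mul_nonneg hp.le (by linarith : (0:ℝ) ≤ 5 + 3*C₂))]
  have h4 : (1 + p) ^ 4 ≤ 1 + 5 * p := by nlinarith [sq_nonneg p, pow_pos hp 2, pow_pos hp 3]
  have h5p : (0:ℝ) < 1 + 5 * p := by linarith
  have hcp : (0:ℝ) < 1 + C₂ * p := by positivity
  have step1 : (5/2) * q * (1 + p) ^ 4 ≤ (5/2) * q * (1 + 5 * p) := by
    apply mul_le_mul_of_nonneg_left h4 (by linarith)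
  have step2 : (5/2) * q * (1 + 5 * p) < p * (1 - (5 + 3*C₂) * p) * (1 + 5 * p) := by
    apply mul_lt_mul_of_pos_right _ h5p
    nlinarith
  have step3 : C₂ * q ^ 2 ≤ C₂ * ((2/5) * p) ^ 2 := by
    apply mul_le_mul_of_nonneg_left _ hC₂.le
    exact pow_le_pow_left₀ hq hqle 2
  have key : (p * (1 - (5 + 3*C₂) * p) * (1 + 5 * p) + C₂ * ((2/5) * p) ^ 2) * (1 + C₂ * p) < p := by
    nlinarith [mul_pos hp hC₂, mul_pos (mul_pos hp hp) hC₂,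
      mul_pos (mul_pos hp hp) (mul_pos hC₂ hC₂),
      mul_pos (mul_pos (mul_pos hp hp) hp) hC₂,
      mul_pos (mul_pos (mul_pos hp hp) hp) (mul_pos hC₂ hC₂),
      sq_nonneg p, pow_pos hp 3]
  have sum : ((5/2) * q * (1 + p) ^ 4 + C₂ * q ^ 2) * (1 + C₂ * p)
      ≤ ((5/2) * q * (1 + 5 * p) + C₂ * ((2/5) * p) ^ 2) * (1 + C₂ * p) := by
    apply mul_le_mul_of_nonneg_right _ hcp.le
    linarith
  have sum2 : ((5/2) * q * (1 + 5 * p) + C₂ * ((2/5) * p) ^ 2) * (1 + C₂ * p)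
      < (p * (1 - (5 + 3*C₂) * p) * (1 + 5 * p) + C₂ * ((2/5) * p) ^ 2) * (1 + C₂ * p) := by
    apply mul_lt_mul_of_pos_right _ hcp
    linarith
  linarith
end
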